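/- Suppose a sequence (a_n)_{n≥0} in O_K gives a continued fraction converging to ξ, suppose both B²−4AC > 0 and σ(B²−4AC) > 0 (so all algebraic conjugates of ξ are real), and suppose a_n ≥ 1 and σ(a_n) > 0 for all n ≥ 1. If no root of σ(A)x² + σ(B)x + σ(C) = 0 lies in the open interval (σ(a_0), σ(a_0) + 1/σ(a_1)), then the sequence (a_n) is not ultimately periodic. -/

import Mathlib

/-!
Suppose `a` is periodic with period `k` after index `N`. Then the tails of `ξ` after `a_N` and
after `a_{N+k}` coincide, and clearing denominators in this equality shows that `ξ` is a root of a
quadratic whose coefficients are continuant expressions, hence lie in `K`; it does not vanish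
identically because distinct convergents differ. As `ξ ∉ K`, this quadratic is proportional to
`A x² + B x + C`. Now apply `σ`: the conjugate expansion `[σ a₀; σ a₁, …]` has positive partial
quotients and the same period, so by the intermediate value theorem its period map has a fixed point
`η > σ a_{N+1}`, and `[σ a₀; …, σ a_N, η]` is a root of the conjugate quadratic lying in
`(σ a₀, σ a₀ + 1 / σ a₁)`.
-/

open Filter Topology

/-- Numerator continuants: `cfP a (n+1) = Pₙ`, with `cfP a 0 = P₋₁ = 1`. -/
def cfP {R : Type*} [CommRing R] (a : ℕ → R) : ℕ → R
  | 0 => 1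
  | 1 => a 0
  | n + 2 => a (n + 1) * cfP a (n + 1) + cfP a n

/-- Denominator continuants: `cfQ a (n+1) = Qₙ`, with `cfQ a 0 = Q₋₁ = 0`. -/
def cfQ {R : Type*} [CommRing R] (a : ℕ → R) : ℕ → R
  | 0 => 0
  | 1 => 1
  | n + 2 => a (n + 1) * cfQ a (n + 1) + cfQ a n

/-- The sequence `a` is ultimately periodic. -/
def UltimatelyPeriodic {α : Type*} (a : ℕ → α) : Prop :=
  ∃ N k : ℕ, 1 ≤ k ∧ ∀ n > N, a (n + k) = a n

/-- The continued fraction `[a₀, a₁, …]` converges to `ξ`: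
`Qₙ ≠ 0` for all sufficiently large `n` and `Pₙ/Qₙ → ξ`. -/
def CFConvergesTo (a : ℕ → ℝ) (ξ : ℝ) : Prop :=
  (∃ N, ∀ n ≥ N, cfQ a (n + 1) ≠ 0) ∧
    Tendsto (fun n => cfP a (n + 1) / cfQ a (n + 1)) atTop (nhds ξ)

section Continuants

variable {R : Type*} [CommRing R] (c : ℕ → R)

theorem cfP_add_two (n : ℕ) : cfP c (n + 2) = c (n + 1) * cfP c (n + 1) + cfP c n := rfl

theorem cfQ_add_two (n : ℕ) : cfQ c (n + 2) = c (n + 1) * cfQ c (n + 1) + cfQ c n := rfl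

theorem cfP_cfQ_det (n : ℕ) :
    cfP c (n + 1) * cfQ c n - cfP c n * cfQ c (n + 1) = (-1) ^ (n + 1) := by
  induction n with
  | zero => simp [cfP, cfQ]
  | succ n ih =>
    rw [cfP_add_two, cfQ_add_two, pow_succ, ← ih]
    ring

theorem map_cfP {S : Type*} [CommRing S] (f : R →+* S) : ∀ n, f (cfP c n) = cfP (fun i => f (c i)) n
  | 0 => by simp [cfP]
  | 1 => by simp [cfP]
  | n + 2 => by rw [cfP_add_two, cfP_add_two, map_add, map_mul, map_cfP f n, map_cfP f (n + 1)]

theorem map_cfQ {S : Type*} [CommRing S] (f : R →+* S) : ∀ n, f (cfQ c n) = cfQ (fun i => f (c i)) n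
  | 0 => by simp [cfQ]
  | 1 => by simp [cfQ]
  | n + 2 => by rw [cfQ_add_two, cfQ_add_two, map_add, map_mul, map_cfQ f n, map_cfQ f (n + 1)]

theorem eq_cfP_shift_add_cfQ_shift (X : ℕ → R) (hX : ∀ n, X (n + 2) = c (n + 1) * X (n + 1) + X n)
    (s : ℕ) : ∀ j, X (s + 1 + j) =
      X (s + 1) * cfP (fun i => c (s + 1 + i)) j + X s * cfQ (fun i => c (s + 1 + i)) j
  | 0 => by simp [cfP, cfQ]
  | 1 => by simp [cfP, cfQ, hX s]; ring
  | j + 2 => by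
    rw [cfP_add_two, cfQ_add_two, show s + 1 + (j + 2) = s + 1 + j + 2 by omega, hX,
      eq_cfP_shift_add_cfQ_shift X hX s j, show s + 1 + j + 1 = s + 1 + (j + 1) by omega,
      eq_cfP_shift_add_cfQ_shift X hX s (j + 1)]
    ring

theorem cfP_add (s j : ℕ) : cfP c (s + 1 + j) =
    cfP c (s + 1) * cfP (fun i => c (s + 1 + i)) j + cfP c s * cfQ (fun i => c (s + 1 + i)) j :=
  eq_cfP_shift_add_cfQ_shift c (cfP c) (cfP_add_two c) s j

theorem cfQ_add (s j : ℕ) : cfQ c (s + 1 + j) =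
    cfQ c (s + 1) * cfP (fun i => c (s + 1 + i)) j + cfQ c s * cfQ (fun i => c (s + 1 + i)) j :=
  eq_cfP_shift_add_cfQ_shift c (cfQ c) (cfQ_add_two c) s j

theorem cfP_add_mul_cfQ_sub (s j : ℕ) :
    cfP c (s + 1 + j) * cfQ c (s + 1) - cfP c (s + 1) * cfQ c (s + 1 + j) =
      (-1) ^ s * cfQ (fun i => c (s + 1 + i)) j := by
  rw [cfP_add, cfQ_add]
  linear_combination (-cfQ (fun i => c (s + 1 + i)) j) * cfP_cfQ_det c s

end Continuants

section Cross

variable {R : Type*} [CommRing R] (c : ℕ → R)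

/-- If `x = [c₀; c₁, …, c_m, u]` and `y = [c₀; c₁, …, c_n, v]`, then
`u = (P_{m-1} - Q_{m-1} x) / (Q_m x - P_m)` and likewise for `v`, so `cfCross c m n x y = 0` says,
after clearing denominators, that the two tails agree. -/
def cfCross (m n : ℕ) (x y : R) : R :=
  (cfP c m - cfQ c m * x) * (cfQ c (n + 1) * y - cfP c (n + 1)) -
    (cfP c n - cfQ c n * y) * (cfQ c (m + 1) * x - cfP c (m + 1))

def cfCross₂ (m n : ℕ) : R := cfQ c n * cfQ c (m + 1) - cfQ c m * cfQ c (n + 1)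

def cfCross₁ (m n : ℕ) : R :=
  cfP c m * cfQ c (n + 1) + cfQ c m * cfP c (n + 1) - cfP c n * cfQ c (m + 1) -
    cfQ c n * cfP c (m + 1)

def cfCross₀ (m n : ℕ) : R := cfP c n * cfP c (m + 1) - cfP c m * cfP c (n + 1)

theorem map_cfCross_coeffs {S : Type*} [CommRing S] (f : R →+* S) (m n : ℕ) (t : S) :
    f (cfCross₂ c m n) * t ^ 2 + f (cfCross₁ c m n) * t + f (cfCross₀ c m n) =
      cfCross (fun i => f (c i)) m n t t := by
  simp only [cfCross₂, cfCross₁, cfCross₀, cfCross, map_sub, map_add, map_mul, map_cfP, map_cfQ]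
  ring

end Cross

section Value

variable {F : Type*} [Field F] (c : ℕ → F)

/-- `cfValue c s t = [c₀; c₁, …, c_s, t]` (junk `0` when the denominator vanishes). -/
def cfValue (s : ℕ) (t : F) : F :=
  (cfP c (s + 1) * t + cfP c s) / (cfQ c (s + 1) * t + cfQ c s)

theorem cfValue_zero {t : F} (ht : t ≠ 0) : cfValue c 0 t = c 0 + 1 / t := by
  simp only [cfValue, cfP, cfQ, one_mul, add_zero, one_div]
  field_simp

theorem cfValue_succ (s : ℕ) {t : F} (ht : t ≠ 0) :
    cfValue c (s + 1) t = cfValue c s (c (s + 1) + 1 / t) := by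
  rw [cfValue, cfValue, cfP_add_two, cfQ_add_two]
  conv_rhs => rw [← mul_div_mul_left _ _ ht]
  congr 1 <;> field_simp <;> ring

theorem cfP_div_cfQ_add_two (r : ℕ) : cfP c (r + 2) / cfQ c (r + 2) = cfValue c r (c (r + 1)) := by
  rw [cfValue, cfP_add_two, cfQ_add_two, mul_comm (cfP c _), mul_comm (cfQ c _)]

theorem cfValue_add (s j : ℕ) {t : F}
    (ht : cfQ (fun i => c (s + 1 + i)) (j + 1) * t + cfQ (fun i => c (s + 1 + i)) j ≠ 0) :
    cfValue c (s + 1 + j) t = cfValue c s (cfValue (fun i => c (s + 1 + i)) j t) := by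
  simp only [cfValue]
  rw [show s + 1 + j + 1 = s + 1 + (j + 1) by omega, cfP_add, cfP_add, cfQ_add, cfQ_add,
    ← div_div_div_cancel_right₀ ht]
  congr 1 <;> field_simp <;> ring

theorem cfP_sub_cfQ_mul_cfValue (m : ℕ) {u : F} (hu : cfQ c (m + 1) * u + cfQ c m ≠ 0) :
    cfP c m - cfQ c m * cfValue c m u = u * (cfQ c (m + 1) * cfValue c m u - cfP c (m + 1)) := by
  have hx : cfValue c m u * (cfQ c (m + 1) * u + cfQ c m) = cfP c (m + 1) * u + cfP c m :=
    div_mul_cancel₀ _ hu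
  linear_combination -hx

theorem cfCross_cfValue (m n : ℕ) {u : F} (hm : cfQ c (m + 1) * u + cfQ c m ≠ 0)
    (hn : cfQ c (n + 1) * u + cfQ c n ≠ 0) :
    cfCross c m n (cfValue c m u) (cfValue c n u) = 0 := by
  rw [cfCross, cfP_sub_cfQ_mul_cfValue c m hm, cfP_sub_cfQ_mul_cfValue c n hn]
  ring

end Value

section Ordered

variable {F : Type*} [Field F] [LinearOrder F] [IsStrictOrderedRing F] {c : ℕ → F}

theorem cfQ_succ_pos (hc : ∀ i, 0 < c (i + 1)) : ∀ n, 0 < cfQ c (n + 1)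
  | 0 => by simp [cfQ]
  | 1 => by simpa [cfQ] using hc 0
  | n + 2 => by
    have := hc (n + 1)
    have := cfQ_succ_pos hc n
    have := cfQ_succ_pos hc (n + 1)
    rw [show n + 2 + 1 = n + 1 + 2 from rfl, cfQ_add_two]
    positivity

theorem cfQ_nonneg (hc : ∀ i, 0 < c (i + 1)) : ∀ n, 0 ≤ cfQ c n
  | 0 => le_rfl
  | n + 1 => (cfQ_succ_pos hc n).le

theorem cfQ_mul_add_pos (hc : ∀ i, 0 < c (i + 1)) (s : ℕ) {t : F} (ht : 0 < t) :
    0 < cfQ c (s + 1) * t + cfQ c s := by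
  have := cfQ_succ_pos hc s
  have := cfQ_nonneg hc s
  positivity

/-- The witness is `u = [c₁; …, c_s, t]`, read as `t` when `s = 0`. -/
theorem exists_cfValue_eq_add_one_div (hc : ∀ i, 0 < c (i + 1)) :
    ∀ (s : ℕ) {t : F}, 0 < t →
      ∃ u, 0 < u ∧ (c (s + 1) < t → c 1 < u) ∧ cfValue c s t = c 0 + 1 / u
  | 0, t, ht => ⟨t, ht, id, cfValue_zero c ht.ne'⟩
  | s + 1, t, ht => by
    have hct : 0 < c (s + 1) + 1 / t := by have := hc s; positivity
    obtain ⟨u, hu, hlt, heq⟩ := exists_cfValue_eq_add_one_div hc s hct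
    exact ⟨u, hu, fun _ => hlt (by simpa using ht), by rw [cfValue_succ c s ht.ne', heq]⟩

theorem lt_cfValue (hc : ∀ i, 0 < c (i + 1)) (s : ℕ) {t : F} (ht : 0 < t) : c 0 < cfValue c s t := by
  obtain ⟨u, hu, -, heq⟩ := exists_cfValue_eq_add_one_div hc s ht
  rw [heq]
  exact lt_add_of_pos_right _ (one_div_pos.2 hu)

theorem cfValue_lt (hc : ∀ i, 0 < c (i + 1)) (s : ℕ) {t : F} (ht : c (s + 1) < t) :
    cfValue c s t < c 0 + 1 / c 1 := by
  obtain ⟨u, -, hlt, heq⟩ := exists_cfValue_eq_add_one_div hc s ((hc s).trans ht)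
  have := one_div_lt_one_div_of_lt (hc 0) (hlt ht)
  rw [heq]
  linarith

theorem exists_cfCross_ne_zero (hc : ∀ i, 0 < c (i + 1)) (m : ℕ) {k : ℕ} (hk : 0 < k) :
    ∃ t, cfCross c m (m + k) t t ≠ 0 := by
  have hq := (cfQ_succ_pos hc m).ne'
  have hshift : cfQ (fun i => c (m + 1 + i)) k ≠ 0 := by
    obtain ⟨j, rfl⟩ : ∃ j, k = j + 1 := ⟨k - 1, by omega⟩
    exact (cfQ_succ_pos (c := fun i => c (m + 1 + i)) (fun i => hc _) j).ne'
  -- at `t = P_m / Q_m` the value is, up to `Q_m²`, a product of two nonzero determinants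
  refine ⟨cfP c (m + 1) / cfQ c (m + 1), fun h => ?_⟩
  have key : cfQ c (m + 1) ^ 2 * cfCross c m (m + k) (cfP c (m + 1) / cfQ c (m + 1))
      (cfP c (m + 1) / cfQ c (m + 1)) =
      (cfP c (m + 1) * cfQ c m - cfP c m * cfQ c (m + 1)) *
        (cfP c (m + 1 + k) * cfQ c (m + 1) - cfP c (m + 1) * cfQ c (m + 1 + k)) := by
    rw [cfCross, show m + k + 1 = m + 1 + k by omega]
    field_simp
    ring
  rw [h, mul_zero, cfP_cfQ_det, cfP_add_mul_cfQ_sub] at key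
  exact mul_ne_zero (pow_ne_zero _ (by norm_num))
    (mul_ne_zero (pow_ne_zero _ (by norm_num)) hshift) key.symm

end Ordered

section Real

theorem cfCross_eq_zero_of_tendsto {c : ℕ → ℝ} (hc : ∀ i, 0 < c (i + 1)) {ξ : ℝ}
    (hξ : Tendsto (fun i => cfP c (i + 1) / cfQ c (i + 1)) atTop (𝓝 ξ)) {m n : ℕ}
    (hper : ∀ i, c (n + 1 + i) = c (m + 1 + i)) : cfCross c m n ξ ξ = 0 := by
  set b : ℕ → ℝ := fun i => c (m + 1 + i)
  have hb : ∀ i, 0 < b i := fun i => by simpa only [b, add_right_comm] using hc (m + i)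
  -- `u j = [b₀; b₁, …, b_{j+1}]` is a tail shared by the convergents of index `m + j + 2` and
  -- `n + j + 2`
  set u : ℕ → ℝ := fun j => cfValue b j (b (j + 1))
  have hu : ∀ j, 0 < u j := fun j => (hb 0).trans (lt_cfValue (fun i => hb _) j (hb _))
  have htendsto : ∀ s, (fun i => c (s + 1 + i)) = b →
      Tendsto (fun j => cfValue c s (u j)) atTop (𝓝 ξ) := by
    intro s hs
    refine (hξ.comp (tendsto_add_atTop_nat (s + 2))).congr fun j => ?_
    have hden := cfQ_mul_add_pos (c := b) (fun i => hb _) j (hb (j + 1))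
    rw [← hs] at hden
    simp only [Function.comp_apply, u, ← hs]
    rw [← cfValue_add c s j hden.ne', show j + (s + 2) + 1 = s + 1 + j + 2 by omega,
      cfP_div_cfQ_add_two]
    rfl
  have hzero : ∀ j, cfCross c m n (cfValue c m (u j)) (cfValue c n (u j)) = 0 := fun j =>
    cfCross_cfValue c m n (cfQ_mul_add_pos hc m (hu j)).ne' (cfQ_mul_add_pos hc n (hu j)).ne'
  have hcont : Continuous fun p : ℝ × ℝ => cfCross c m n p.1 p.2 := by
    unfold cfCross
    fun_prop
  have hlim := (hcont.tendsto (ξ, ξ)).comp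
    ((htendsto m rfl).prodMk_nhds (htendsto n (funext hper)))
  simp only [Function.comp_def, hzero] at hlim
  exact tendsto_nhds_unique hlim tendsto_const_nhds

theorem exists_cfValue_eq_self {e : ℕ → ℝ} (he : ∀ i, 0 < e i) {j : ℕ} (hper : e (j + 1) = e 0) :
    ∃ η, e 0 < η ∧ cfValue e j η = η := by
  have he' : ∀ i, 0 < e (i + 1) := fun i => he _
  have hr : e 0 < e 0 + 1 / e 1 := lt_add_of_pos_right _ (one_div_pos.2 (he 1))
  have hcont : ContinuousOn (fun t => cfValue e j t - t) (Set.Icc (e 0) (e 0 + 1 / e 1)) := by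
    refine ContinuousOn.sub (ContinuousOn.div (by fun_prop) (by fun_prop) fun t ht => ?_)
      continuousOn_id
    exact (cfQ_mul_add_pos he' j ((he 0).trans_le ht.1)).ne'
  have hleft := lt_cfValue he' j (he 0)
  have hright := cfValue_lt he' j (t := e 0 + 1 / e 1) (by rwa [hper])
  obtain ⟨η, hη, hfix⟩ := intermediate_value_Ioo' hr.le hcont
    ⟨sub_neg.2 hright, sub_pos.2 hleft⟩
  exact ⟨η, hη.1, sub_eq_zero.1 hfix⟩

theorem exists_cfCross_eq_zero_mem_Ioo {d : ℕ → ℝ} (hd : ∀ i, 0 < d (i + 1)) (m : ℕ) {k : ℕ}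
    (hk : 0 < k) (hper : ∀ i, d (m + k + 1 + i) = d (m + 1 + i)) :
    ∃ x, cfCross d m (m + k) x x = 0 ∧ d 0 < x ∧ x < d 0 + 1 / d 1 := by
  obtain ⟨j, rfl⟩ : ∃ j, k = j + 1 := ⟨k - 1, by omega⟩
  set e : ℕ → ℝ := fun i => d (m + 1 + i)
  have he : ∀ i, 0 < e i := fun i => by simpa only [e, add_right_comm] using hd (m + i)
  have hej : e (j + 1) = e 0 := by
    simp only [e]
    rw [← hper 0]
    congr 1
    omega
  obtain ⟨η, hη, hfix⟩ := exists_cfValue_eq_self he hej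
  have hη0 : 0 < η := (he 0).trans hη
  -- `[d₀; …, d_m, η] = [d₀; …, d_m, e₀, …, e_j, η]` since `η` is fixed by the period
  have hval : cfValue d (m + (j + 1)) η = cfValue d m η := by
    rw [show m + (j + 1) = m + 1 + j by omega,
      cfValue_add d m j (cfQ_mul_add_pos (fun i => he _) j hη0).ne', hfix]
  refine ⟨cfValue d m η, ?_, lt_cfValue hd m hη0, cfValue_lt hd m hη⟩
  have := cfCross_cfValue d m (m + (j + 1)) (cfQ_mul_add_pos hd m hη0).ne'
    (cfQ_mul_add_pos hd _ hη0).ne'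
  rwa [hval] at this

end Real

section Algebra

theorem not_mem_of_finrank_lt_natDegree_minpoly {L : Type*} [Field L] [CharZero L]
    (K : Subfield L) [FiniteDimensional ℚ K] {ξ : L}
    (h : Module.finrank ℚ K < (minpoly ℚ ξ).natDegree) : ξ ∉ K := by
  intro hξ
  have heq := minpoly.algHom_eq K.subtype.toRatAlgHom Subtype.val_injective ⟨ξ, hξ⟩
  have hle := minpoly.natDegree_le (A := ℚ) (⟨ξ, hξ⟩ : K)
  rw [← heq] at hle
  exact h.not_ge hle

theorem mul_eq_mul_of_quadratic_eq_zero {L : Type*} [Field L] {K : Subfield L} {ξ : L}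
    (hξ : ξ ∉ K) {A B C α β γ : K} (h : (A : L) * ξ ^ 2 + B * ξ + C = 0)
    (h' : (α : L) * ξ ^ 2 + β * ξ + γ = 0) : α * B = A * β ∧ α * C = A * γ := by
  have hlin : ((α * B - A * β : K) : L) * ξ + ((α * C - A * γ : K) : L) = 0 := by
    push_cast
    linear_combination (α : L) * h - (A : L) * h'
  have h₁ : α * B - A * β = 0 := by
    by_contra hne
    have hne' : ((α * B - A * β : K) : L) ≠ 0 := by exact_mod_cast hne
    apply hξ
    have : ξ = ((-(α * C - A * γ) / (α * B - A * β) : K) : L) := by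
      rw [Subfield.coe_div, Subfield.coe_neg, eq_div_iff hne']
      linear_combination hlin
    rw [this]
    exact SetLike.coe_mem _
  rw [h₁, ZeroMemClass.coe_zero, zero_mul, zero_add] at hlin
  exact ⟨sub_eq_zero.1 h₁, sub_eq_zero.1 (by exact_mod_cast hlin)⟩

theorem map_quadratic_eq_zero_of_eq_zero {L : Type*} [Field L] {K : Subfield L} {ξ : L}
    (hξ : ξ ∉ K) {A B C α β γ : K} (hA : A ≠ 0) (hαβγ : ¬(α = 0 ∧ β = 0 ∧ γ = 0))
    (h : (A : L) * ξ ^ 2 + B * ξ + C = 0) (h' : (α : L) * ξ ^ 2 + β * ξ + γ = 0)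
    {M : Type*} [CommRing M] [IsDomain M] (σ : K →+* M) {x : M}
    (hx : σ α * x ^ 2 + σ β * x + σ γ = 0) : σ A * x ^ 2 + σ B * x + σ C = 0 := by
  obtain ⟨hB, hC⟩ := mul_eq_mul_of_quadratic_eq_zero hξ h h'
  have hα : α ≠ 0 := by
    rintro rfl
    exact hαβγ ⟨rfl, by simpa [hA] using hB.symm, by simpa [hA] using hC.symm⟩
  have hσB : σ α * σ B = σ A * σ β := by rw [← map_mul, ← map_mul, hB]
  have hσC : σ α * σ C = σ A * σ γ := by rw [← map_mul, ← map_mul, hC]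
  refine (mul_eq_zero.1 ?_).resolve_left ((map_ne_zero σ).2 hα)
  linear_combination σ A * hx + x * hσB + hσC

end Algebra

theorem not_periodic_of_no_root_in_interval_general
    (K : Subfield ℝ) (hK : Module.finrank ℚ K = 2)
    (σ : K →+* ℝ)
    (ξ : ℝ) (hquartic : (minpoly ℚ ξ).natDegree = 4)
    (A B C : K) (hA : A ≠ 0)
    (heq : (A : ℝ) * ξ ^ 2 + (B : ℝ) * ξ + (C : ℝ) = 0)
    (a : ℕ → K)
    (hge : ∀ n : ℕ, 1 ≤ n → (1 : ℝ) ≤ (↑(a n) : ℝ) ∧ 0 < σ (a n))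
    (hconv : CFConvergesTo (fun n => (a n : ℝ)) ξ)
    (hnoroot : ¬∃ x : ℝ, σ A * x ^ 2 + σ B * x + σ C = 0 ∧
      σ (a 0) < x ∧ x < σ (a 0) + 1 / σ (a 1)) :
    ¬UltimatelyPeriodic a := by
  rintro ⟨N, k, hk, hper⟩
  have hshift : ∀ i, a (N + k + 1 + i) = a (N + 1 + i) := fun i => by
    rw [show N + k + 1 + i = N + 1 + i + k by omega]
    exact hper _ (by omega)
  have hpos : ∀ i, (0 : ℝ) < a (i + 1) := fun i => one_pos.trans_le (hge (i + 1) (by omega)).1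
  have : FiniteDimensional ℚ K := Module.finite_of_finrank_pos (by omega)
  have hξ : ξ ∉ K := not_mem_of_finrank_lt_natDegree_minpoly K (by omega)
  have hreal : cfCross (fun i => (a i : ℝ)) N (N + k) ξ ξ = 0 :=
    cfCross_eq_zero_of_tendsto hpos hconv.2 fun i => by simp only [hshift]
  obtain ⟨x, hx, hx0, hx1⟩ := exists_cfCross_eq_zero_mem_Ioo (d := fun i => σ (a i))
    (fun i => (hge (i + 1) (by omega)).2) N hk fun i => by simp only [hshift]
  obtain ⟨t, ht⟩ := exists_cfCross_ne_zero (c := fun i => (a i : ℝ)) hpos N hk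
  refine hnoroot ⟨x, map_quadratic_eq_zero_of_eq_zero hξ hA ?_ heq
    ((map_cfCross_coeffs a K.subtype N (N + k) ξ).trans hreal) σ
    ((map_cfCross_coeffs a σ N (N + k) x).trans hx), hx0, hx1⟩
  rintro ⟨h₂, h₁, h₀⟩
  apply ht
  simpa [h₂, h₁, h₀] using (map_cfCross_coeffs a K.subtype N (N + k) t).symm

/-- if no root of the conjugate quadratic lies in
`(σ(a₀), σ(a₀) + 1/σ(a₁))`, the expansion is not ultimately periodic. -/
theorem not_periodic_of_no_root_in_interval
    (K : Subfield ℝ) (hK : Module.finrank ℚ K = 2)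
    (σ : K →+* ℝ) (hσ : σ ≠ K.subtype)
    (ξ : ℝ) (hquartic : (minpoly ℚ ξ).natDegree = 4)
    (A B C : K) (hAint : IsIntegral ℤ A) (hBint : IsIntegral ℤ B)
    (hCint : IsIntegral ℤ C) (hA : A ≠ 0)
    (heq : (A : ℝ) * ξ ^ 2 + (B : ℝ) * ξ + (C : ℝ) = 0)
    (hdisc : (0 : ℝ) < (↑(B ^ 2 - 4 * A * C : ↥K) : ℝ))
    (hdiscσ : 0 < σ (B ^ 2 - 4 * A * C))
    (a : ℕ → K) (ha : ∀ n, IsIntegral ℤ (a n))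
    (hge : ∀ n : ℕ, 1 ≤ n → (1 : ℝ) ≤ (↑(a n) : ℝ) ∧ 0 < σ (a n))
    (hconv : CFConvergesTo (fun n => (a n : ℝ)) ξ)
    (hnoroot : ¬∃ x : ℝ, σ A * x ^ 2 + σ B * x + σ C = 0 ∧
      σ (a 0) < x ∧ x < σ (a 0) + 1 / σ (a 1)) :
    ¬UltimatelyPeriodic a :=
  not_periodic_of_no_root_in_interval_general K hK σ ξ hquartic A B C hA heq a hge hconv hnoroot
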